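/- Let H be a self-adjoint operator on a Hilbert space, I a compact interval, s ≥ 0, and suppose the limiting absorption principle sup_{Re z ∈ I, Im z ≠ 0} ‖⟨Q⟩^{-s}(H-z)^{-1}⟨Q⟩^{-s}‖ < ∞ holds for a self-adjoint operator Q. Then for every weighted Weyl sequence (f_n, z_n): f_n = E_I(H) f_n in the domain of H, Im z_n ≠ 0, Re z_n ∈ I, Im z_n → 0, (H - z_n)f_n in the domain of ⟨Q⟩^s with ‖⟨Q⟩^s (H - z_n) f_n‖ → 0, and ‖⟨Q⟩^{-s} f_n‖ → η, one has η = 0. -/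

import Mathlib

open Filter

namespace ContinuousLinearMap

variable {𝕜 E E' F G : Type*} [NontriviallyNormedField 𝕜]
  [NormedAddCommGroup E] [NormedSpace 𝕜 E] [NormedAddCommGroup E'] [NormedSpace 𝕜 E']
  [NormedAddCommGroup F] [NormedSpace 𝕜 F] [NormedAddCommGroup G] [NormedSpace 𝕜 G]
  {A : E →L[𝕜] E'} {R : E' →L[𝕜] E} {f : E} {g : G}

theorem apply_eq_comp_apply_of_comp_eq_one (hRA : R ∘L A = 1) (V : E →L[𝕜] F)
    {W : G →L[𝕜] E'} (hAf : A f = W g) : V f = (V ∘L R ∘L W) g := by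
  have hf : R (A f) = f := by simpa using congrArg (· f) hRA
  simp only [coe_comp, Function.comp_apply, ← hAf, hf]

theorem norm_apply_le_of_comp_eq_one (hRA : R ∘L A = 1) (V : E →L[𝕜] F)
    {W : G →L[𝕜] E'} (hAf : A f = W g) : ‖V f‖ ≤ ‖V ∘L R ∘L W‖ * ‖g‖ :=
  apply_eq_comp_apply_of_comp_eq_one hRA V hAf ▸ le_opNorm _ g

end ContinuousLinearMap

/-- `W` stands for `⟨Q⟩^{-s}` and `Res z` for `(H - z)⁻¹`; that `(H - z_n) f_n` lies in the domain of
`⟨Q⟩^s` with `⟨Q⟩^s (H - z_n) f_n = g_n` is encoded as `(H - z_n) f_n = W g_n`. -/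
theorem weyl_sequence_mass_zero_of_lap_general
    {E : Type*} [NormedAddCommGroup E] [InnerProductSpace ℂ E]
    (H W : E →L[ℂ] E)
    (I : Set ℝ)
    (Res : ℂ → E →L[ℂ] E)
    (hRes : ∀ z : ℂ, z.im ≠ 0 →
      (H - z • (1 : E →L[ℂ] E)) ∘L Res z = 1 ∧
      Res z ∘L (H - z • (1 : E →L[ℂ] E)) = 1)
    (hLAP : ∃ C : ℝ, ∀ z : ℂ, z.re ∈ I → z.im ≠ 0 →
      ‖W ∘L Res z ∘L W‖ ≤ C)
    (f : ℕ → E) (z : ℕ → ℂ) (g : ℕ → E)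
    (hzre : ∀ n, (z n).re ∈ I) (hzim : ∀ n, (z n).im ≠ 0)
    (hg : ∀ n, H (f n) - z n • f n = W (g n))
    (hg0 : Tendsto (fun n => ‖g n‖) atTop (nhds 0))
    (η : ℝ) (hη : Tendsto (fun n => ‖W (f n)‖) atTop (nhds η)) :
    η = 0 := by
  obtain ⟨C, hC⟩ := hLAP
  have hbound (n : ℕ) : ‖W (f n)‖ ≤ C * ‖g n‖ :=
    calc ‖W (f n)‖ ≤ ‖W ∘L Res (z n) ∘L W‖ * ‖g n‖ :=
          ContinuousLinearMap.norm_apply_le_of_comp_eq_one (hRes (z n) (hzim n)).2 W (hg n)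
      _ ≤ C * ‖g n‖ := by gcongr; exact hC (z n) (hzre n) (hzim n)
  have hCg : Tendsto (fun n => C * ‖g n‖) atTop (nhds 0) := by
    simpa using hg0.const_mul C
  exact tendsto_nhds_unique hη (squeeze_zero (fun _ => norm_nonneg _) hbound hCg)

/-- One direction of the weighted-Weyl-sequence characterization of the LAP:
if the LAP holds on `I` with weight `W` (playing the role of `⟨Q⟩^{-s}`), then
every weighted Weyl sequence has zero mass. Here `Res z` is the resolvent
`(H - z)⁻¹`, `EI` the spectral projection of `H` on `I`, and membership of
`(H - z_n) f_n` in the domain of `⟨Q⟩^s` is expressed by `(H - z_n) f_n = W g_n`. -/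
theorem weyl_sequence_mass_zero_of_lap
    {E : Type*} [NormedAddCommGroup E] [InnerProductSpace ℂ E] [CompleteSpace E]
    (H W EI : E →L[ℂ] E) (hH : IsSelfAdjoint H) (hW : IsSelfAdjoint W)
    (I : Set ℝ) (hI : IsCompact I) (s : ℝ) (hs : 0 ≤ s)
    (hEproj : EI ∘L EI = EI) (hEsa : IsSelfAdjoint EI)
    (Res : ℂ → E →L[ℂ] E)
    (hRes : ∀ z : ℂ, z.im ≠ 0 →
      (H - z • (1 : E →L[ℂ] E)) ∘L Res z = 1 ∧
      Res z ∘L (H - z • (1 : E →L[ℂ] E)) = 1)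
    (hLAP : ∃ C : ℝ, ∀ z : ℂ, z.re ∈ I → z.im ≠ 0 →
      ‖W ∘L Res z ∘L W‖ ≤ C)
    (f : ℕ → E) (z : ℕ → ℂ) (g : ℕ → E)
    (hEf : ∀ n, EI (f n) = f n)
    (hzre : ∀ n, (z n).re ∈ I) (hzim : ∀ n, (z n).im ≠ 0)
    (hzim0 : Tendsto (fun n => (z n).im) atTop (nhds 0))
    (hg : ∀ n, H (f n) - z n • f n = W (g n))
    (hg0 : Tendsto (fun n => ‖g n‖) atTop (nhds 0))
    (η : ℝ) (hη : Tendsto (fun n => ‖W (f n)‖) atTop (nhds η)) :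
    η = 0 :=
  weyl_sequence_mass_zero_of_lap_general H W I Res hRes hLAP f z g hzre hzim hg hg0 η hη
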